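/- arXiv:1903.04906 — 5 statements merged into one kernel-verified Lean document; each statement's English description precedes it below -/
import Mathlib

section
/- For every natural number n ≥ 0 and every real number u with |u| < 1, the polylogarithm of negative order satisfies Li_{-n}(u) = ∑_{k=0}^{n} k! · S(n+1, k+1) · (u/(1-u))^{k+1}, where Li_{-n}(u) := ∑_{l=1}^{∞} l^n u^l and S(n+1, k+1) denotes the Stirling number of the second kind. -/
open Finset

/-- The Stirling number of the second kind: the number of partitions of an
`m`-element set into `b` nonempty blocks. -/
noncomputable def stirling2 (m b : ℕ) : ℕ :=
  Nat.card {P : Finset (Finset (Fin m)) //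
    P.card = b ∧ ∅ ∉ P ∧ ∀ x : Fin m, ∃! A, A ∈ P ∧ x ∈ A}

/-- The polylogarithm of negative order `-n`: `Li_{-n}(u) = ∑_{l ≥ 1} l^n u^l`. -/
noncomputable def negPolylog (n : ℕ) (u : ℝ) : ℝ :=
  ∑' l : ℕ, ((l + 1 : ℕ) : ℝ) ^ n * u ^ (l + 1)


def IsPart {m : ℕ} (P : Finset (Finset (Fin m))) : Prop :=
  ∅ ∉ P ∧ ∀ x : Fin m, ∃! A, A ∈ P ∧ x ∈ A

abbrev PartT (m : ℕ) := {P : Finset (Finset (Fin m)) // IsPart P}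

lemma block_nonempty {m : ℕ} (P : PartT m) {A : Finset (Fin m)} (hA : A ∈ P.1) :
    A.Nonempty :=
  Finset.nonempty_iff_ne_empty.2 fun e => P.2.1 (e ▸ hA)

noncomputable def blk {m : ℕ} (P : PartT m) (x : Fin m) : Finset (Fin m) :=
  (P.2.2 x).exists.choose

lemma blk_mem {m : ℕ} (P : PartT m) (x : Fin m) : blk P x ∈ P.1 :=
  (P.2.2 x).exists.choose_spec.1

lemma mem_blk {m : ℕ} (P : PartT m) (x : Fin m) : x ∈ blk P x :=
  (P.2.2 x).exists.choose_spec.2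

lemma blk_eq {m : ℕ} (P : PartT m) {x : Fin m} {A : Finset (Fin m)}
    (hA : A ∈ P.1) (hx : x ∈ A) : blk P x = A :=
  ((P.2.2 x).unique ⟨blk_mem P x, mem_blk P x⟩ ⟨hA, hx⟩)

lemma card_le {m : ℕ} (P : PartT m) : P.1.card ≤ m := by
  have h : Function.Injective
      (fun A : {A // A ∈ P.1} => (block_nonempty P A.2).choose) := by
    rintro ⟨A, hA⟩ ⟨B, hB⟩ h
    have hxA := (block_nonempty P hA).choose_spec
    have hxB := (block_nonempty P hB).choose_spec
    simp only at h
    rw [h] at hxA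
    exact Subtype.ext ((P.2.2 _).unique ⟨hA, hxA⟩ ⟨hB, hxB⟩)
  simpa using Fintype.card_le_of_injective _ h


noncomputable def Phi {m l : ℕ} (z : Σ P : PartT m, {A // A ∈ P.1} ↪ Fin l) :
    Fin m → Fin l :=
  fun x => z.2 ⟨blk z.1 x, blk_mem z.1 x⟩

lemma Phi_fiber {m l : ℕ} (z : Σ P : PartT m, {A // A ∈ P.1} ↪ Fin l) (x y : Fin m) :
    Phi z y = Phi z x ↔ y ∈ blk z.1 x := by
  constructor
  · intro h
    have h2 : blk z.1 y = blk z.1 x := Subtype.ext_iff.1 (z.2.injective h)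
    have h3 := mem_blk z.1 y
    rwa [h2] at h3
  · intro hy
    simp only [Phi, blk_eq z.1 (blk_mem z.1 x) hy]

lemma Phi_injective {m l : ℕ} :
    Function.Injective (Phi (m := m) (l := l)) := by
  rintro ⟨P, g⟩ ⟨Q, h⟩ hf
  have hblk : ∀ x, blk P x = blk Q x := by
    intro x
    ext y
    rw [← Phi_fiber ⟨P, g⟩, ← Phi_fiber ⟨Q, h⟩, hf]
  have hmem : ∀ {R S : PartT m}, (∀ x, blk R x = blk S x) →
      ∀ {A}, A ∈ R.1 → A ∈ S.1 := by
    intro R S hRS A hA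
    obtain ⟨a, ha⟩ := block_nonempty R hA
    rw [← blk_eq R hA ha, hRS a]
    exact blk_mem S a
  have hPQ : P = Q := Subtype.ext (Finset.ext fun A =>
    ⟨fun hA => hmem hblk hA, fun hA => hmem (fun x => (hblk x).symm) hA⟩)
  subst hPQ
  suffices hg : g = h by rw [hg]
  ext ⟨A, hA⟩
  obtain ⟨a, ha⟩ := block_nonempty P hA
  have e1 : Phi ⟨P, g⟩ a = g ⟨A, hA⟩ := by
    simp only [Phi, blk_eq P hA ha]
  have e2 : Phi ⟨P, h⟩ a = h ⟨A, hA⟩ := by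
    simp only [Phi, blk_eq P hA ha]
  rw [← e1, ← e2, hf]

lemma Phi_surjective {m l : ℕ} :
    Function.Surjective (Phi (m := m) (l := l)) := by
  intro f
  classical
  set Pf : Finset (Finset (Fin m)) :=
    univ.image (fun x => univ.filter (fun y => f y = f x)) with hPfdef
  have mem_fib : ∀ x : Fin m, univ.filter (fun y => f y = f x) ∈ Pf :=
    fun x => mem_image_of_mem _ (mem_univ x)
  have fiber_eq : ∀ {A : Finset (Fin m)}, A ∈ Pf → ∀ {a}, a ∈ A →
      A = univ.filter (fun y => f y = f a) := by
    intro A hA a ha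
    obtain ⟨x, -, rfl⟩ := mem_image.1 hA
    have hfa : f a = f x := (mem_filter.1 ha).2
    ext y; simp [hfa]
  have key : ∀ {A : Finset (Fin m)}, A ∈ Pf → ∀ {a}, a ∈ A → ∀ {c}, c ∈ A → f c = f a := by
    intro A hA a ha c hc
    rw [fiber_eq hA ha] at hc
    exact (mem_filter.1 hc).2
  have eqblocks : ∀ {A : Finset (Fin m)}, A ∈ Pf → ∀ {a}, a ∈ A →
      ∀ {B : Finset (Fin m)}, B ∈ Pf → ∀ {b}, b ∈ B → f a = f b → A = B := by
    intro A hA a ha B hB b hb hab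
    rw [fiber_eq hA ha, fiber_eq hB hb, hab]
  have hPf : IsPart Pf := by
    constructor
    · intro h
      obtain ⟨x, -, hx⟩ := mem_image.1 h
      have : x ∈ (∅ : Finset (Fin m)) := hx ▸ (by simp : x ∈ univ.filter (fun y => f y = f x))
      simp at this
    · intro x
      refine ⟨univ.filter (fun y => f y = f x), ⟨mem_fib x, by simp⟩, ?_⟩
      rintro B ⟨hB, hxB⟩
      exact (fiber_eq hB hxB).symm ▸ rfl
  set P : PartT m := ⟨Pf, hPf⟩ with hP
  have hne : ∀ A : {A // A ∈ P.1}, A.1.Nonempty := fun A => block_nonempty P A.2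
  have ginj : Function.Injective (fun A : {A // A ∈ P.1} => f (hne A).choose) := by
    rintro ⟨A, hA⟩ ⟨B, hB⟩ hfe
    have haA := (hne ⟨A, hA⟩).choose_spec
    have hbB := (hne ⟨B, hB⟩).choose_spec
    exact Subtype.ext (eqblocks hA haA hB hbB hfe)
  refine ⟨⟨P, ⟨_, ginj⟩⟩, ?_⟩
  funext x
  have hb : blk P x = univ.filter (fun y => f y = f x) :=
    blk_eq P (mem_fib x) (by simp)
  show f (hne ⟨blk P x, blk_mem P x⟩).choose = f x
  exact key (blk_mem P x) (mem_blk P x) (hne ⟨blk P x, blk_mem P x⟩).choose_spec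

lemma Phi_bij {m l : ℕ} : Function.Bijective (Phi (m := m) (l := l)) :=
  ⟨Phi_injective, Phi_surjective⟩

lemma stirling2_eq_card (m k : ℕ) [Fintype (PartT m)] [DecidablePred fun P : PartT m => P.1.card = k] :
    stirling2 m k = (univ.filter (fun P : PartT m => P.1.card = k)).card := by
  classical
  rw [← Fintype.card_subtype]
  rw [stirling2, Nat.card_eq_fintype_card]
  apply Fintype.card_congr
  exact ((Equiv.subtypeSubtypeEquivSubtypeInter IsPart (fun P => P.card = k)).trans
    (Equiv.subtypeEquivRight (fun P => and_comm))).symm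

lemma pow_eq_sum (m l : ℕ) :
    l ^ m = ∑ k ∈ Finset.range (m + 1), stirling2 m k * l.descFactorial k := by
  classical
  haveI : Fintype (PartT m) := Fintype.ofFinite _
  calc l ^ m = Fintype.card (Fin m → Fin l) := by simp
    _ = Fintype.card (Σ P : PartT m, {A // A ∈ P.1} ↪ Fin l) :=
        (Fintype.card_congr (Equiv.ofBijective _ Phi_bij)).symm
    _ = ∑ P : PartT m, Fintype.card ({A // A ∈ P.1} ↪ Fin l) := Fintype.card_sigma
    _ = ∑ P : PartT m, l.descFactorial P.1.card := by
        refine Fintype.sum_congr _ _ fun P => ?_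
        rw [Fintype.card_embedding_eq, Fintype.card_coe, Fintype.card_fin]
    _ = ∑ k ∈ Finset.range (m + 1), ∑ P ∈ univ.filter (fun P : PartT m => P.1.card = k),
          l.descFactorial P.1.card :=
        (sum_fiberwise_of_maps_to (fun P _ => mem_range.2 (Nat.lt_succ_of_le (card_le P))) _).symm
    _ = ∑ k ∈ Finset.range (m + 1), stirling2 m k * l.descFactorial k := by
        refine Finset.sum_congr rfl fun k _ => ?_
        rw [stirling2_eq_card]
        rw [Finset.sum_congr rfl (fun P hP => by rw [(mem_filter.1 hP).2]), sum_const, smul_eq_mul]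

lemma stirling2_succ_zero (n : ℕ) : stirling2 (n + 1) 0 = 0 := by
  rw [stirling2, Nat.card_eq_zero]
  left
  constructor
  rintro ⟨P, h0, hne, hcov⟩
  obtain ⟨A, ⟨hA, -⟩, -⟩ := hcov 0
  rw [Finset.card_eq_zero.1 h0] at hA
  simp at hA

lemma pow_succ_eq (n M : ℕ) :
    (M + 1) ^ n = ∑ k ∈ Finset.range (n + 1), stirling2 (n + 1) (k + 1) * M.descFactorial k := by
  apply Nat.eq_of_mul_eq_mul_left (Nat.succ_pos M)
  have h := pow_eq_sum (n + 1) (M + 1)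
  rw [Finset.sum_range_succ'] at h
  calc (M + 1) * (M + 1) ^ n = (M + 1) ^ (n + 1) := by ring
    _ = ∑ k ∈ Finset.range (n + 1), stirling2 (n + 1) (k + 1) * (M + 1).descFactorial (k + 1) := by
        rw [h, stirling2_succ_zero]; simp
    _ = (M + 1) * ∑ k ∈ Finset.range (n + 1), stirling2 (n + 1) (k + 1) * M.descFactorial k := by
        rw [Finset.mul_sum]
        refine Finset.sum_congr rfl fun k _ => ?_
        rw [Nat.succ_descFactorial_succ]
        ring


lemma hasSum_descFactorial_mul (k : ℕ) {u : ℝ} (hu : |u| < 1) :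
    HasSum (fun M : ℕ => (M.descFactorial k : ℝ) * u ^ (M + 1))
      (k.factorial * (u / (1 - u)) ^ (k + 1)) := by
  have hn : ‖u‖ < 1 := by rwa [Real.norm_eq_abs]
  have hu1 : (1 : ℝ) - u ≠ 0 := by
    intro h
    rw [sub_eq_zero] at h
    rw [← h] at hn
    simp at hn
  have h1 := (hasSum_choose_mul_geometric_of_norm_lt_one k hn).mul_left
    ((k.factorial : ℝ) * u ^ (k + 1))
  have h3 : (fun n : ℕ => (k.factorial : ℝ) * u ^ (k + 1) * ((n + k).choose k * u ^ n))
      = fun n : ℕ => (((n + k).descFactorial k : ℕ) : ℝ) * u ^ (n + k + 1) := by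
    funext n
    rw [Nat.descFactorial_eq_factorial_mul_choose]
    push_cast
    rw [show n + k + 1 = (k + 1) + n by ring, pow_add]
    ring
  rw [h3] at h1
  have h4 := (hasSum_nat_add_iff (f := fun M : ℕ => (M.descFactorial k : ℝ) * u ^ (M + 1)) k).1 h1
  have h5 : ∑ i ∈ Finset.range k, ((i.descFactorial k : ℕ) : ℝ) * u ^ (i + 1) = 0 := by
    apply Finset.sum_eq_zero
    intro i hi
    rw [Nat.descFactorial_eq_zero_iff_lt.2 (mem_range.1 hi)]
    simp
  rw [h5, add_zero] at h4
  rw [show (k.factorial : ℝ) * (u / (1 - u)) ^ (k + 1)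
      = k.factorial * u ^ (k + 1) * (1 / (1 - u) ^ (k + 1)) by
    rw [div_pow]
    ring]
  exact h4

theorem negPolylog_eq_sum_stirling (n : ℕ) (u : ℝ) (hu : |u| < 1) :
    negPolylog n u =
      ∑ k ∈ Finset.range (n + 1),
        (Nat.factorial k : ℝ) * (stirling2 (n + 1) (k + 1) : ℝ) * (u / (1 - u)) ^ (k + 1) := by
  have key : ∀ M : ℕ, ((M + 1 : ℕ) : ℝ) ^ n * u ^ (M + 1)
      = ∑ k ∈ Finset.range (n + 1),
          (stirling2 (n + 1) (k + 1) : ℝ) * ((M.descFactorial k : ℝ) * u ^ (M + 1)) := by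
    intro M
    have := pow_succ_eq n M
    calc ((M + 1 : ℕ) : ℝ) ^ n * u ^ (M + 1)
        = (((M + 1) ^ n : ℕ) : ℝ) * u ^ (M + 1) := by push_cast; ring
      _ = ((∑ k ∈ Finset.range (n + 1), stirling2 (n + 1) (k + 1) * M.descFactorial k : ℕ) : ℝ)
            * u ^ (M + 1) := by rw [this]
      _ = _ := by
          push_cast
          rw [Finset.sum_mul]
          exact Finset.sum_congr rfl fun k _ => by ring
  rw [negPolylog, tsum_congr key,
    Summable.tsum_finsetSum (fun k _ => ((hasSum_descFactorial_mul k hu).summable.mul_left _))]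
  refine Finset.sum_congr rfl fun k _ => ?_
  rw [((hasSum_descFactorial_mul k hu).mul_left _).tsum_eq]
  ring
end

section
/- Let θ > 0 and let (M_k)_{k≥2} be a sequence of independent random variables on a probability space with P(M_k = j) = ((k-1)/(θ+k-1)) · (θ/(θ+k-1))^j for all j ∈ ℕ₀. Then S(n)/log n → θ almost surely as n → ∞, where S(n) = ∑_{k=2}^{n} M_k. -/
/-!
`S(n)` is a sum of independent geometric variables with `𝔼 M_k = θ / (k - 1)` and
`Var M_k ≤ (θ + θ²) / (k - 1)`, so `𝔼 S(n) = θ H_{n-1} ~ θ log n` and `Var S(n) = O(log n)`.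
Along `n_m = 2 ^ m²` the normalised variances `Var S(n_m) / (log n_m)² = O(1 / m²)` are summable,
hence `∑ ((S(n_m) - 𝔼 S(n_m)) / log n_m)²` has finite expectation and its terms tend to `0`
almost surely. Since `S` is nondecreasing and `log n_{m+1} / log n_m → 1`, the convergence
`S(n_m) / log n_m → θ` extends to the whole sequence.
-/

open MeasureTheory ProbabilityTheory Filter Finset Topology

lemma Real.monotone_log_natCast : Monotone fun n : ℕ ↦ Real.log n := by
  intro m n hmn
  rcases m.eq_zero_or_pos with rfl | hm
  · simpa using Real.log_natCast_nonneg n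
  · exact Real.log_le_log (by exact_mod_cast hm) (by exact_mod_cast hmn)

lemma Real.log_two_pow_sq (m : ℕ) : Real.log (2 ^ m ^ 2 : ℕ) = m ^ 2 * Real.log 2 := by
  push_cast
  rw [Real.log_pow]
  push_cast
  ring

lemma sum_Icc_two_inv_sub_one (n : ℕ) : ∑ k ∈ Icc 2 n, ((k : ℝ) - 1)⁻¹ = harmonic (n - 1) := by
  rw [harmonic_eq_sum_Icc]
  push_cast
  refine sum_nbij' (· - 1) (· + 1) ?_ ?_ ?_ ?_ ?_ <;> intro k hk <;> simp only [mem_Icc] at hk ⊢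
  all_goals first | omega | rw [Nat.cast_sub (by omega), Nat.cast_one]

lemma log_le_harmonic_pred (n : ℕ) : Real.log n ≤ harmonic (n - 1) := by
  rcases n.eq_zero_or_pos with rfl | hn
  · simp
  · simpa [Nat.sub_add_cancel hn] using log_add_one_le_harmonic (n - 1)

lemma harmonic_pred_le_one_add_log (n : ℕ) : (harmonic (n - 1) : ℝ) ≤ 1 + Real.log n :=
  (harmonic_le_one_add_log (n - 1)).trans
    (add_le_add_right (Real.monotone_log_natCast (Nat.sub_le n 1)) 1)

lemma tendsto_harmonic_pred_div_log :
    Tendsto (fun n : ℕ ↦ (harmonic (n - 1) : ℝ) / Real.log n) atTop (𝓝 1) := by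
  have hlog : Tendsto (fun n : ℕ ↦ Real.log n) atTop atTop :=
    Real.tendsto_log_atTop.comp tendsto_natCast_atTop_atTop
  have hupper : Tendsto (fun n : ℕ ↦ 1 / Real.log n + 1) atTop (𝓝 1) := by
    simpa using hlog.inv_tendsto_atTop.add_const 1
  refine tendsto_of_tendsto_of_tendsto_of_le_of_le' tendsto_const_nhds hupper ?_ ?_ <;>
    filter_upwards [hlog.eventually_gt_atTop 0] with n hn
  · exact (one_le_div hn).2 (log_le_harmonic_pred n)
  · rw [div_le_iff₀ hn, add_mul, one_div_mul_cancel hn.ne', one_mul]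
    exact harmonic_pred_le_one_add_log n

lemma Nat.two_pow_sqrt_log_sq_le {n : ℕ} (hn : n ≠ 0) : 2 ^ (sqrt (log 2 n)) ^ 2 ≤ n :=
  (Nat.pow_le_pow_right two_pos (sqrt_le' _)).trans (pow_log_le_self 2 hn)

lemma Nat.lt_two_pow_sqrt_log_add_one_sq (n : ℕ) : n < 2 ^ (sqrt (log 2 n) + 1) ^ 2 :=
  (lt_pow_succ_log_self one_lt_two n).trans_le (Nat.pow_le_pow_right two_pos (lt_succ_sqrt' _))

lemma Nat.tendsto_sqrt_log_atTop : Tendsto (fun n ↦ sqrt (log 2 n)) atTop atTop :=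
  tendsto_atTop_atTop.2 fun m ↦
    ⟨2 ^ m ^ 2, fun _ hn ↦ le_sqrt'.2 (le_log_of_pow_le one_lt_two hn)⟩

lemma tendsto_log_two_pow_add_one_sq_div :
    Tendsto (fun m : ℕ ↦ Real.log (2 ^ (m + 1) ^ 2 : ℕ) / Real.log (2 ^ m ^ 2 : ℕ)) atTop
      (𝓝 1) := by
  have h : Tendsto (fun m : ℕ ↦ (1 + 1 / (m : ℝ)) ^ 2) atTop (𝓝 1) := by
    simpa using ((tendsto_one_div_atTop_nhds_zero_nat (𝕜 := ℝ)).const_add 1).pow 2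
  refine h.congr' ?_
  filter_upwards [eventually_ne_atTop 0] with m hm
  rw [Real.log_two_pow_sq, Real.log_two_pow_sq]
  field_simp
  push_cast
  ring

theorem summable_div_log_two_pow_sq {g : ℕ → ℝ} {C : ℝ} (hg0 : ∀ n, 0 ≤ g n)
    (hg : ∀ n, g n ≤ C * (1 + Real.log n)) :
    Summable fun m : ℕ ↦ g (2 ^ m ^ 2) / Real.log (2 ^ m ^ 2 : ℕ) ^ 2 := by
  have hC : 0 ≤ C := by simpa using (hg0 1).trans (hg 1)
  refine Summable.of_nonneg_of_le (fun m ↦ div_nonneg (hg0 _) (sq_nonneg _)) (fun m ↦ ?_)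
    ((Real.summable_one_div_nat_pow.2 one_lt_two).mul_left (C * (1 + Real.log 2) / Real.log 2 ^ 2))
  rcases m.eq_zero_or_pos with rfl | hm
  · simp
  have hm1 : (1 : ℝ) ≤ m := by exact_mod_cast hm
  rw [Real.log_two_pow_sq, div_le_iff₀ (by positivity)]
  calc g (2 ^ m ^ 2) ≤ C * (1 + m ^ 2 * Real.log 2) := Real.log_two_pow_sq m ▸ hg (2 ^ m ^ 2)
    _ ≤ C * (1 + Real.log 2) * m ^ 2 := by
        nlinarith [mul_nonneg hC (show 0 ≤ (m : ℝ) ^ 2 - 1 by nlinarith)]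
    _ = _ := by field_simp

theorem tendsto_div_of_monotone_of_tendsto_div_comp {u f : ℕ → ℝ} {a k : ℕ → ℕ} {l : ℝ}
    (hu : Monotone u) (hu0 : ∀ n, 0 ≤ u n) (hf : Monotone f) (hfa : ∀ᶠ m in atTop, 0 < f (a m))
    (hk : Tendsto k atTop atTop) (hak : ∀ᶠ n in atTop, a (k n) ≤ n ∧ n ≤ a (k n + 1))
    (hlim : Tendsto (fun m ↦ u (a m) / f (a m)) atTop (𝓝 l))
    (hratio : Tendsto (fun m ↦ f (a (m + 1)) / f (a m)) atTop (𝓝 1)) :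
    Tendsto (fun n ↦ u n / f n) atTop (𝓝 l) := by
  have hk1 : Tendsto (fun n ↦ k n + 1) atTop atTop := (tendsto_add_atTop_nat 1).comp hk
  have hupper := (hlim.comp hk1).mul (hratio.comp hk)
  have hlower := (hlim.comp hk).mul ((hratio.comp hk).inv₀ one_ne_zero)
  rw [mul_one] at hupper
  rw [inv_one, mul_one] at hlower
  refine tendsto_of_tendsto_of_tendsto_of_le_of_le' hlower hupper ?_ ?_ <;>
    filter_upwards [hak, hk.eventually hfa, hk1.eventually hfa] with n ⟨hlo, hhi⟩ hA hB <;>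
    simp only [Function.comp_apply]
  · calc u (a (k n)) / f (a (k n)) * (f (a (k n + 1)) / f (a (k n)))⁻¹
        = u (a (k n)) / f (a (k n + 1)) := by field_simp
      _ ≤ u n / f (a (k n + 1)) := by gcongr; exact hu hlo
      _ ≤ u n / f n := div_le_div_of_nonneg_left (hu0 n) (hA.trans_le (hf hlo)) (hf hhi)
  · calc u n / f n ≤ u (a (k n + 1)) / f n := by
          gcongr
          · exact hA.trans_le (hf hlo) |>.le
          · exact hu hhi
      _ ≤ u (a (k n + 1)) / f (a (k n)) := div_le_div_of_nonneg_left (hu0 _) hA (hf hlo)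
      _ = u (a (k n + 1)) / f (a (k n + 1)) * (f (a (k n + 1)) / f (a (k n))) := by field_simp

theorem tendsto_div_log_of_monotone_of_tendsto_two_pow_sq {u : ℕ → ℝ} {l : ℝ}
    (hu : Monotone u) (hu0 : ∀ n, 0 ≤ u n)
    (h : Tendsto (fun m ↦ u (2 ^ m ^ 2) / Real.log (2 ^ m ^ 2 : ℕ)) atTop (𝓝 l)) :
    Tendsto (fun n ↦ u n / Real.log n) atTop (𝓝 l) := by
  refine tendsto_div_of_monotone_of_tendsto_div_comp (a := fun m ↦ 2 ^ m ^ 2) hu hu0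
    Real.monotone_log_natCast ?_ Nat.tendsto_sqrt_log_atTop ?_ h tendsto_log_two_pow_add_one_sq_div
  · filter_upwards [eventually_ne_atTop 0] with m hm
    rw [Real.log_two_pow_sq]
    positivity
  · filter_upwards [eventually_ne_atTop 0] with n hn
    exact ⟨Nat.two_pow_sqrt_log_sq_le hn, (Nat.lt_two_pow_sqrt_log_add_one_sq n).le⟩

namespace ProbabilityTheory

section Geometric

variable {p : unitInterval}

lemma norm_one_sub_unitInterval_lt_one (hp : p ≠ 0) : ‖(1 - p : ℝ)‖ < 1 := by
  have : (0 : ℝ) < p := lt_of_le_of_ne p.2.1 fun h ↦ hp (Subtype.ext h.symm)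
  rw [Real.norm_eq_abs, abs_lt]
  constructor <;> linarith [p.2.2]

lemma hasSum_geometricMeasure_natCast (hp : p ≠ 0) :
    HasSum (fun n : ℕ ↦ (1 - p : ℝ) ^ n * p * n) ((1 - p) / p) := by
  have hp' : (p : ℝ) ≠ 0 := by simpa using hp
  have h := (hasSum_coe_mul_geometric_of_norm_lt_one
    (norm_one_sub_unitInterval_lt_one hp)).mul_left (p : ℝ)
  rw [sub_sub_cancel] at h
  rw [show (1 - p : ℝ) / p = p * ((1 - p) / p ^ 2) by field_simp]
  exact h.congr_fun fun n ↦ by ring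

lemma hasSum_geometricMeasure_natCast_sq (hp : p ≠ 0) :
    HasSum (fun n : ℕ ↦ (1 - p : ℝ) ^ n * p * n ^ 2) ((1 - p) * (2 - p) / p ^ 2) := by
  have hp' : (p : ℝ) ≠ 0 := by simpa using hp
  have hq := norm_one_sub_unitInterval_lt_one hp
  -- `n ^ 2 = 2 (n + 2).choose 2 - 3 n - 2`
  have h := (((hasSum_choose_mul_geometric_of_norm_lt_one 2 hq).mul_left 2).sub
    ((hasSum_coe_mul_geometric_of_norm_lt_one hq).mul_left 3)).sub
    ((hasSum_geometric_of_norm_lt_one hq).mul_left 2) |>.mul_left (p : ℝ)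
  rw [sub_sub_cancel] at h
  rw [show (1 - p : ℝ) * (2 - p) / p ^ 2
      = p * (2 * (1 / p ^ (2 + 1)) - 3 * ((1 - p) / p ^ 2) - 2 * (p : ℝ)⁻¹) by field_simp; ring]
  refine h.congr_fun fun n ↦ ?_
  rw [Nat.cast_choose_two]
  push_cast
  ring

lemma memLp_natCast_geometricMeasure (hp : p ≠ 0) :
    MemLp (fun n : ℕ ↦ (n : ℝ)) 2 (geometricMeasure p) := by
  rw [memLp_two_iff_integrable_sq (by fun_prop), integrable_geometricMeasure_iff hp]
  simpa using (hasSum_geometricMeasure_natCast_sq hp).summable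

lemma integral_natCast_geometricMeasure (hp : p ≠ 0) :
    ∫ n, (n : ℝ) ∂geometricMeasure p = (1 - p) / p := by
  rw [integral_geometricMeasure hp]
  exact (hasSum_geometricMeasure_natCast hp).tsum_eq

lemma variance_natCast_geometricMeasure (hp : p ≠ 0) :
    Var[fun n : ℕ ↦ (n : ℝ); geometricMeasure p] = (1 - p) / p ^ 2 := by
  have hp' : (p : ℝ) ≠ 0 := by simpa using hp
  have hsq : ∫ n, ((fun n : ℕ ↦ (n : ℝ)) ^ 2) n ∂geometricMeasure p
      = (1 - p) * (2 - p) / p ^ 2 := by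
    rw [integral_geometricMeasure hp]
    exact (hasSum_geometricMeasure_natCast_sq hp).tsum_eq
  rw [variance_eq_sub (memLp_natCast_geometricMeasure hp), integral_natCast_geometricMeasure hp,
    hsq]
  field_simp
  ring

end Geometric

variable {Ω : Type*} [MeasurableSpace Ω] {μ : Measure Ω}

lemma hasLaw_of_forall_measure_singleton {𝓧 : Type*} [MeasurableSpace 𝓧] [Countable 𝓧]
    [MeasurableSingletonClass 𝓧] {X : Ω → 𝓧} (hX : Measurable X) {ν : Measure 𝓧}
    (h : ∀ x, μ {ω | X ω = x} = ν {x}) : HasLaw X ν μ :=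
  ⟨hX.aemeasurable, Measure.ext_of_singleton fun x ↦ by
    rw [Measure.map_apply hX (measurableSet_singleton x)]
    exact h x⟩

theorem geometric_moments_of_measure_eq {X : Ω → ℕ} (hX : Measurable X) {θ c : ℝ} (hθ : 0 ≤ θ)
    (hc : 0 < c)
    (hlaw : ∀ j : ℕ, μ {ω | X ω = j} = ENNReal.ofReal (c / (θ + c) * (θ / (θ + c)) ^ j)) :
    MemLp (fun ω ↦ (X ω : ℝ)) 2 μ ∧ μ[fun ω ↦ (X ω : ℝ)] = θ / c ∧
      Var[fun ω ↦ (X ω : ℝ); μ] = θ * (θ + c) / c ^ 2 := by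
  have hθc : 0 < θ + c := by linarith
  set p : unitInterval := ⟨c / (θ + c), by positivity, div_le_one_of_le₀ (by linarith) hθc.le⟩
  have hp : p ≠ 0 := fun h ↦ (div_pos hc hθc).ne' (congrArg Subtype.val h)
  have hpc : (p : ℝ) = c / (θ + c) := rfl
  have h1p : (1 - p : ℝ) = θ / (θ + c) := by rw [hpc]; field_simp; ring
  have hlawX : HasLaw X (geometricMeasure p) μ := hasLaw_of_forall_measure_singleton hX fun j ↦ by
    rw [hlaw, geometricMeasure_singleton hp, h1p, mul_comm]
  have hcast : AEStronglyMeasurable (fun n : ℕ ↦ (n : ℝ)) (μ.map X) := by fun_prop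
  refine ⟨(memLp_map_measure_iff hcast hX.aemeasurable).1 ?_, ?_, ?_⟩
  · rw [hlawX.map_eq]
    exact memLp_natCast_geometricMeasure hp
  · rw [← Function.comp_def Nat.cast X, hlawX.integral_comp (by fun_prop),
      integral_natCast_geometricMeasure hp, h1p, hpc]
    field_simp
  · rw [← Function.comp_def Nat.cast X, ← variance_map hcast.aemeasurable hX.aemeasurable,
      hlawX.map_eq, variance_natCast_geometricMeasure hp, h1p, hpc]
    field_simp

theorem watterson_moments_of_measure_eq {X : Ω → ℕ} (hX : Measurable X) {θ : ℝ} (hθ : 0 ≤ θ)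
    {k : ℕ} (hk : 2 ≤ k) (hlaw : ∀ j : ℕ, μ {ω | X ω = j} =
      ENNReal.ofReal (((k : ℝ) - 1) / (θ + k - 1) * (θ / (θ + k - 1)) ^ j)) :
    MemLp (fun ω ↦ (X ω : ℝ)) 2 μ ∧ μ[fun ω ↦ (X ω : ℝ)] = θ / (k - 1) ∧
      Var[fun ω ↦ (X ω : ℝ); μ] ≤ (θ + θ ^ 2) / (k - 1) := by
  have hc : (1 : ℝ) ≤ k - 1 := by linarith [show (2 : ℝ) ≤ k by exact_mod_cast hk]
  obtain ⟨hmem, hmean, hvar⟩ := geometric_moments_of_measure_eq hX hθ (c := k - 1) (by linarith)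
    (by simpa only [add_sub_assoc] using hlaw)
  refine ⟨hmem, hmean, ?_⟩
  rw [hvar, div_le_div_iff₀ (by positivity) (by positivity)]
  nlinarith [mul_le_mul_of_nonneg_left hc (sq_nonneg θ)]

theorem ae_tendsto_zero_of_summable_integral_sq {Z : ℕ → Ω → ℝ} (hZ : ∀ m, MemLp (Z m) 2 μ)
    (hsum : Summable fun m ↦ ∫ ω, Z m ω ^ 2 ∂μ) :
    ∀ᵐ ω ∂μ, Tendsto (fun m ↦ Z m ω) atTop (𝓝 0) := by
  have hmeas : ∀ m, AEMeasurable (fun ω ↦ ENNReal.ofReal (Z m ω ^ 2)) μ :=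
    fun m ↦ (hZ m).aestronglyMeasurable.aemeasurable.pow_const 2 |>.ennreal_ofReal
  have hfin : ∫⁻ ω, ∑' m, ENNReal.ofReal (Z m ω ^ 2) ∂μ ≠ ⊤ := by
    rw [lintegral_tsum hmeas]
    simp_rw [← ofReal_integral_eq_lintegral_ofReal (hZ _).integrable_sq
      (ae_of_all _ fun ω ↦ sq_nonneg _)]
    rw [← ENNReal.ofReal_tsum_of_nonneg (fun m ↦ integral_nonneg fun ω ↦ sq_nonneg _) hsum]
    exact ENNReal.ofReal_ne_top
  filter_upwards [ae_lt_top' (AEMeasurable.tsum hmeas) hfin] with ω hω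
  have hsq : Summable fun m ↦ Z m ω ^ 2 :=
    (ENNReal.summable_toReal hω.ne).congr fun m ↦ ENNReal.toReal_ofReal (sq_nonneg _)
  rw [tendsto_zero_iff_abs_tendsto_zero]
  simpa [Function.comp_def, Real.sqrt_sq_eq_abs] using hsq.tendsto_atTop_zero.sqrt

theorem ae_tendsto_sub_integral_div_of_summable_variance [IsFiniteMeasure μ]
    {Y : ℕ → Ω → ℝ} {b : ℕ → ℝ} (hY : ∀ m, MemLp (Y m) 2 μ)
    (hsum : Summable fun m ↦ Var[Y m; μ] / b m ^ 2) :
    ∀ᵐ ω ∂μ, Tendsto (fun m ↦ (Y m ω - μ[Y m]) / b m) atTop (𝓝 0) := by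
  refine ae_tendsto_zero_of_summable_integral_sq
    (fun m ↦ ((hY m).sub (memLp_const _)).mul_const (b m)⁻¹) (hsum.congr fun m ↦ ?_)
  simp_rw [div_pow]
  rw [integral_div, variance_eq_integral (hY m).aestronglyMeasurable.aemeasurable]

theorem ae_tendsto_div_log_two_pow_sq [IsFiniteMeasure μ] {Y : ℕ → Ω → ℝ} {l C : ℝ}
    (hY : ∀ n, MemLp (Y n) 2 μ)
    (hmean : Tendsto (fun n : ℕ ↦ μ[Y n] / Real.log n) atTop (𝓝 l))
    (hvar : ∀ n, Var[Y n; μ] ≤ C * (1 + Real.log n)) :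
    ∀ᵐ ω ∂μ, Tendsto (fun m ↦ Y (2 ^ m ^ 2) ω / Real.log (2 ^ m ^ 2 : ℕ)) atTop (𝓝 l) := by
  have hpow : Tendsto (fun m : ℕ ↦ 2 ^ m ^ 2) atTop atTop :=
    (tendsto_pow_atTop_atTop_of_one_lt one_lt_two).comp (tendsto_pow_atTop two_ne_zero)
  have hsum := summable_div_log_two_pow_sq (g := fun n ↦ Var[Y n; μ])
    (fun n ↦ variance_nonneg _ _) hvar
  filter_upwards [ae_tendsto_sub_integral_div_of_summable_variance
    (Y := fun m ↦ Y (2 ^ m ^ 2)) (fun m ↦ hY _) hsum] with ω hω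
  have := hω.add (hmean.comp hpow)
  rw [zero_add] at this
  refine this.congr fun m ↦ ?_
  rw [Function.comp_apply, ← add_div, sub_add_cancel]

section Sums

variable {X : ℕ → Ω → ℝ}

lemma integral_sum_Icc_two_eq_mul_harmonic {θ : ℝ} (hX : ∀ k, 2 ≤ k → Integrable (X k) μ)
    (hmean : ∀ k : ℕ, 2 ≤ k → μ[X k] = θ / ((k : ℝ) - 1)) (n : ℕ) :
    μ[fun ω ↦ ∑ k ∈ Icc 2 n, X k ω] = θ * harmonic (n - 1) := by
  rw [integral_finsetSum _ fun k hk ↦ hX k (mem_Icc.1 hk).1,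
    sum_congr rfl fun k hk ↦ hmean k (mem_Icc.1 hk).1, ← sum_Icc_two_inv_sub_one, mul_sum]
  rfl

lemma variance_sum_Icc_two_le_mul_harmonic [IsFiniteMeasure μ] {C : ℝ}
    (hX : ∀ k, 2 ≤ k → MemLp (X k) 2 μ)
    (hindep : iIndepFun (fun k : {k : ℕ // 2 ≤ k} ↦ X k) μ)
    (hvar : ∀ k : ℕ, 2 ≤ k → Var[X k; μ] ≤ C / ((k : ℝ) - 1)) (n : ℕ) :
    Var[fun ω ↦ ∑ k ∈ Icc 2 n, X k ω; μ] ≤ C * harmonic (n - 1) := by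
  have hpair : Set.Pairwise (Icc 2 n : Set ℕ) fun i j ↦ X i ⟂ᵢ[μ] X j := by
    intro i hi j hj hij
    simp only [coe_Icc, Set.mem_Icc] at hi hj
    exact hindep.indepFun (i := ⟨i, hi.1⟩) (j := ⟨j, hj.1⟩) (by simpa using hij)
  rw [← sum_fn, IndepFun.variance_sum (fun k hk ↦ hX k (mem_Icc.1 hk).1) hpair,
    ← sum_Icc_two_inv_sub_one, mul_sum]
  exact sum_le_sum fun k hk ↦ hvar k (mem_Icc.1 hk).1

end Sums

end ProbabilityTheory

/-- Watterson's strong law of large numbers: if `(M_k)_{k≥2}` are independent geometric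
random variables with success parameters `(k-1)/(θ+k-1)` and `S(n) = ∑_{k=2}^n M_k`, then
`S(n)/log n → θ` almost surely. -/
theorem segregatingSites_slln {Ω : Type*} [MeasurableSpace Ω]
    (μ : Measure Ω) [IsProbabilityMeasure μ]
    (θ : ℝ) (hθ : 0 < θ)
    (M : ℕ → Ω → ℕ) (hmeas : ∀ k, Measurable (M k))
    (hindep : iIndepFun
      (fun k : {k : ℕ // 2 ≤ k} => M k.val) μ)
    (hlaw : ∀ k, 2 ≤ k → ∀ j : ℕ, μ {ω | M k ω = j} =
      ENNReal.ofReal (((k : ℝ) - 1) / (θ + k - 1) * (θ / (θ + k - 1)) ^ j)) :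
    ∀ᵐ ω ∂μ,
      Tendsto (fun n : ℕ => (∑ k ∈ Finset.Icc 2 n, (M k ω : ℝ)) / Real.log n)
        atTop (nhds θ) := by
  have hM (k : ℕ) (hk : 2 ≤ k) := watterson_moments_of_measure_eq (hmeas k) hθ.le hk (hlaw k hk)
  set S : ℕ → Ω → ℝ := fun n ω ↦ ∑ k ∈ Icc 2 n, (M k ω : ℝ)
  have hmean (n : ℕ) : μ[S n] = θ * harmonic (n - 1) := integral_sum_Icc_two_eq_mul_harmonic
    (fun k hk ↦ (hM k hk).1.integrable one_le_two) (fun k hk ↦ (hM k hk).2.1) n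
  have hmeanS : Tendsto (fun n : ℕ ↦ μ[S n] / Real.log n) atTop (𝓝 θ) := by
    simp_rw [hmean, mul_div_assoc]
    simpa using tendsto_harmonic_pred_div_log.const_mul θ
  have hvarS (n : ℕ) : Var[S n; μ] ≤ (θ + θ ^ 2) * (1 + Real.log n) :=
    (variance_sum_Icc_two_le_mul_harmonic (fun k hk ↦ (hM k hk).1)
      (hindep.comp (fun _ ↦ Nat.cast) fun _ ↦ measurable_from_nat) (fun k hk ↦ (hM k hk).2.2)
      n).trans (by gcongr; exact harmonic_pred_le_one_add_log n)
  filter_upwards [ae_tendsto_div_log_two_pow_sq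
    (fun n ↦ memLp_finsetSum _ fun k hk ↦ (hM k (mem_Icc.1 hk).1).1) hmeanS hvarS] with ω hω
  refine tendsto_div_log_of_monotone_of_tendsto_two_pow_sq (u := fun n ↦ S n ω)
    (fun a b hab ↦ sum_le_sum_of_subset_of_nonneg (Icc_subset_Icc_right hab) fun _ _ _ ↦ ?_)
    (fun n ↦ sum_nonneg fun _ _ ↦ ?_) hω <;> positivity
end

section
/- Let θ > 0 and let k ≥ 2 be an integer. Let M be a random variable on ℕ₀ with P(M = j) = ((k-1)/(θ+k-1)) · (θ/(θ+k-1))^j for all j ∈ ℕ₀, and set B = 1{M ≥ 1}. Then Var(M - B) = θ²(θ² + 3θ(k-1) + (k-1)²) / ((k-1)²(k-1+θ)²). In particular, if 0 < θ ≤ 1 then Var(M - B) ≤ 5/(k-1)². -/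
open MeasureTheory ProbabilityTheory

lemma tsum_sq_mul_geometric {r : ℝ} (h0 : 0 ≤ r) (h1 : r < 1) :
    ∑' n : ℕ, (n : ℝ) ^ 2 * r ^ n = r * (1 + r) / (1 - r) ^ 3 := by
  have hr : ‖r‖ < 1 := by rwa [Real.norm_eq_abs, abs_of_nonneg h0]
  have h2 : Summable (fun n : ℕ => (n : ℝ) ^ 2 * r ^ n) := by
    simpa using summable_pow_mul_geometric_of_norm_lt_one 2 hr
  have hs1 : Summable (fun n : ℕ => (n : ℝ) * r ^ n) := by
    simpa using summable_pow_mul_geometric_of_norm_lt_one 1 hr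
  have hs0 : Summable (fun n : ℕ => r ^ n) := summable_geometric_of_lt_one h0 h1
  set S := ∑' n : ℕ, (n : ℝ) ^ 2 * r ^ n with hSdef
  have key : S = r * S + (2 * r * (r / (1 - r) ^ 2) + r * (1 - r)⁻¹) := by
    conv_lhs => rw [hSdef, Summable.tsum_eq_zero_add h2]
    have hterm : ∀ n : ℕ, ((n + 1 : ℕ) : ℝ) ^ 2 * r ^ (n + 1) =
        r * ((n : ℝ) ^ 2 * r ^ n) + (2 * r * ((n : ℝ) * r ^ n) + r * r ^ n) := by
      intro n; push_cast; ring
    rw [tsum_congr hterm, Summable.tsum_add (h2.mul_left r) ((hs1.mul_left (2 * r)).add (hs0.mul_left r)),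
      Summable.tsum_add (hs1.mul_left (2 * r)) (hs0.mul_left r), tsum_mul_left, tsum_mul_left,
      tsum_mul_left, tsum_coe_mul_geometric_of_norm_lt_one hr, tsum_geometric_of_lt_one h0 h1]
    simp
    exact Or.inl hSdef.symm
  have h1r : (1 : ℝ) - r ≠ 0 := by intro h; linarith [sub_eq_zero.mp h]
  rw [eq_div_iff (pow_ne_zero 3 h1r)]
  field_simp at key
  have key2 : S * (1 - r) ^ 3 * (1 - r) = r * (1 + r) * (1 - r) := by linear_combination (1 - r) * key
  exact mul_right_cancel₀ h1r key2

set_option maxHeartbeats 1000000 in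
/-- Variance of the difference `M - B` between a geometric random variable `M` with
success parameter `(k-1)/(θ+k-1)` and its Bernoulli indicator `B = 1{M ≥ 1}`:
`Var(M - B) = θ²(θ² + 3θ(k-1) + (k-1)²)/((k-1)²(k-1+θ)²)`, and this is at most
`5/(k-1)²` when `0 < θ ≤ 1`. -/
theorem variance_geometric_sub_indicator {Ω : Type*} [MeasurableSpace Ω]
    (μ : Measure Ω) [IsProbabilityMeasure μ]
    (θ : ℝ) (hθ : 0 < θ) (k : ℕ) (hk : 2 ≤ k)
    (M : Ω → ℕ) (hmeas : Measurable M)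
    (hlaw : ∀ j : ℕ, μ {ω | M ω = j} =
      ENNReal.ofReal (((k : ℝ) - 1) / (θ + k - 1) * (θ / (θ + k - 1)) ^ j)) :
    variance (fun ω => (M ω : ℝ) - if 1 ≤ M ω then 1 else 0) μ =
        θ ^ 2 * (θ ^ 2 + 3 * θ * ((k : ℝ) - 1) + ((k : ℝ) - 1) ^ 2) /
          (((k : ℝ) - 1) ^ 2 * ((k : ℝ) - 1 + θ) ^ 2) ∧
    (θ ≤ 1 →
      variance (fun ω => (M ω : ℝ) - if 1 ≤ M ω then 1 else 0) μ ≤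
        5 / ((k : ℝ) - 1) ^ 2) := by
  have hK1 : (1 : ℝ) ≤ (k : ℝ) - 1 := by
    have : (2 : ℝ) ≤ (k : ℝ) := by exact_mod_cast hk
    linarith
  have hK0 : (0 : ℝ) < (k : ℝ) - 1 := by linarith
  set K : ℝ := (k : ℝ) - 1 with hKdef
  have ht : (0 : ℝ) < θ + K := by linarith
  set r : ℝ := θ / (θ + K) with hrdef
  set c : ℝ := K / (θ + K) with hcdef
  have hr0 : 0 ≤ r := by positivity
  have hr1 : r < 1 := by
    rw [hrdef, div_lt_one ht]; linarith
  have hc0 : 0 ≤ c := by positivity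
  have hcr : c = 1 - r := by
    rw [hcdef, hrdef]; field_simp; ring
  have hnr : ‖r‖ < 1 := by rwa [Real.norm_eq_abs, abs_of_nonneg hr0]
  -- the two functions
  set g : ℕ → ℝ := fun j => (j : ℝ) - if 1 ≤ j then 1 else 0 with hgdef
  have hg0 : g 0 = 0 := by simp [hgdef]
  have hgs : ∀ n : ℕ, g (n + 1) = (n : ℝ) := by
    intro n; simp [hgdef]
  have hgnn : ∀ j, 0 ≤ g j := by
    intro j
    cases j with
    | zero => simp [hg0]
    | succ n => rw [hgs]; positivity
  have hgle : ∀ j : ℕ, g j ≤ (j : ℝ) := by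
    intro j
    cases j with
    | zero => simp [hg0]
    | succ n => rw [hgs]; push_cast; linarith
  -- law of the pushforward
  have hν : ∀ j, (μ.map M) {j} = ENNReal.ofReal (c * r ^ j) := by
    intro j
    rw [Measure.map_apply hmeas (measurableSet_singleton j)]
    have : M ⁻¹' {j} = {ω | M ω = j} := rfl
    rw [this, hlaw j, hcdef, hrdef]
    norm_num [hKdef]
    ring_nf
  -- generic integration lemma
  have intkey : ∀ f : ℕ → ℝ, (∀ j, 0 ≤ f j) → Summable (fun j => f j * (c * r ^ j)) →
      Integrable (fun ω => f (M ω)) μ ∧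
        ∫ ω, f (M ω) ∂μ = ∑' j, f j * (c * r ^ j) := by
    intro f hf hsum
    have hterm_nn : ∀ j, 0 ≤ f j * (c * r ^ j) := fun j => mul_nonneg (hf j) (by positivity)
    have hint : Integrable f (μ.map M) := by
      refine ⟨measurable_from_nat.aestronglyMeasurable, ?_⟩
      rw [HasFiniteIntegral]
      rw [lintegral_countable' (fun a => ‖f a‖ₑ)]
      have heq : ∀ a, ‖f a‖ₑ * (μ.map M) {a} = ENNReal.ofReal (f a * (c * r ^ a)) := by
        intro a
        rw [Real.enorm_eq_ofReal (hf a), hν a, ← ENNReal.ofReal_mul (hf a)]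
      rw [tsum_congr heq, ← ENNReal.ofReal_tsum_of_nonneg hterm_nn hsum]
      exact ENNReal.ofReal_lt_top
    have hint2 : Integrable (fun ω => f (M ω)) μ :=
      (integrable_map_measure measurable_from_nat.aestronglyMeasurable hmeas.aemeasurable).mp hint
    refine ⟨hint2, ?_⟩
    rw [← integral_map hmeas.aemeasurable measurable_from_nat.aestronglyMeasurable,
      integral_countable' hint]
    refine tsum_congr fun j => ?_
    rw [measureReal_def, hν j, ENNReal.toReal_ofReal (by positivity), smul_eq_mul, mul_comm]
  -- summability facts
  have hs2 : Summable (fun n : ℕ => (n : ℝ) ^ 2 * r ^ n) := by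
    simpa using summable_pow_mul_geometric_of_norm_lt_one 2 hnr
  have hs1 : Summable (fun n : ℕ => (n : ℝ) * r ^ n) := by
    simpa using summable_pow_mul_geometric_of_norm_lt_one 1 hnr
  have hsumg : Summable (fun j : ℕ => g j * (c * r ^ j)) := by
    refine Summable.of_nonneg_of_le (fun j => mul_nonneg (hgnn j) (by positivity))
      (fun j => ?_) (hs1.mul_right c)
    calc g j * (c * r ^ j) ≤ (j : ℝ) * (c * r ^ j) :=
          mul_le_mul_of_nonneg_right (hgle j) (by positivity)
      _ = (j : ℝ) * r ^ j * c := by ring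
  have hsumg2 : Summable (fun j : ℕ => g j ^ 2 * (c * r ^ j)) := by
    refine Summable.of_nonneg_of_le (fun j => mul_nonneg (by positivity) (by positivity))
      (fun j => ?_) (hs2.mul_right c)
    calc g j ^ 2 * (c * r ^ j) ≤ (j : ℝ) ^ 2 * (c * r ^ j) :=
          mul_le_mul_of_nonneg_right (pow_le_pow_left₀ (hgnn j) (hgle j) 2) (by positivity)
      _ = (j : ℝ) ^ 2 * r ^ j * c := by ring
  obtain ⟨hintg, hEg⟩ := intkey g hgnn hsumg
  obtain ⟨hintg2, hEg2⟩ := intkey (fun j => g j ^ 2) (fun j => by positivity) hsumg2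
  -- evaluate the first moment
  have hE1 : ∑' j, g j * (c * r ^ j) = c * r * (r / (1 - r) ^ 2) := by
    rw [Summable.tsum_eq_zero_add hsumg]
    have hterm : ∀ n : ℕ, g (n + 1) * (c * r ^ (n + 1)) = (c * r) * ((n : ℝ) * r ^ n) := by
      intro n; rw [hgs]; ring
    rw [tsum_congr hterm, tsum_mul_left, tsum_coe_mul_geometric_of_norm_lt_one hnr]
    simp [hg0]
  -- evaluate the second moment
  have hE2 : ∑' j, g j ^ 2 * (c * r ^ j) = c * r * (r * (1 + r) / (1 - r) ^ 3) := by
    rw [Summable.tsum_eq_zero_add hsumg2]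
    have hterm : ∀ n : ℕ, g (n + 1) ^ 2 * (c * r ^ (n + 1)) =
        (c * r) * ((n : ℝ) ^ 2 * r ^ n) := by
      intro n; rw [hgs]; ring
    rw [tsum_congr hterm, tsum_mul_left, tsum_sq_mul_geometric hr0 hr1]
    simp [hg0]
  -- the variance
  set X : Ω → ℝ := fun ω => (M ω : ℝ) - if 1 ≤ M ω then 1 else 0 with hXdef
  have hXg : X = fun ω => g (M ω) := rfl
  have hXmeas : AEStronglyMeasurable X μ := by
    have : Measurable (fun ω => g (M ω)) := (measurable_from_nat (f := g)).comp hmeas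
    exact this.aestronglyMeasurable
  have hXsq : (X ^ 2) = fun ω => g (M ω) ^ 2 := by
    funext ω; simp [hXg]
  have hmem : MemLp X 2 μ := by
    refine (memLp_two_iff_integrable_sq hXmeas).mpr ?_
    exact hintg2
  have hvar : variance X μ =
      θ ^ 2 * (θ ^ 2 + 3 * θ * K + K ^ 2) / (K ^ 2 * (K + θ) ^ 2) := by
    rw [variance_eq_sub hmem, hXsq, hXg, hEg2, hEg, hE1, hE2, hcr, hrdef]
    have h1 : θ + K ≠ 0 := ne_of_gt ht
    have h2 : K ≠ 0 := ne_of_gt hK0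
    clear_value X g c r K
    field_simp
    have hK2 : K ^ 2 * K⁻¹ ^ 2 = 1 := by rw [← mul_pow, mul_inv_cancel₀ h2, one_pow]
    linear_combination (θ ^ 4 + 5 * K * θ ^ 3 + 8 * K ^ 2 * θ ^ 2 + 5 * K ^ 3 * θ + K ^ 4) * hK2
  constructor
  · exact hvar
  · intro hθ1
    rw [hvar]
    rw [div_le_div_iff₀ (by positivity) (by positivity)]
    have hA : (0:ℝ) ≤ θ ^ 2 + 3 * θ * K + K ^ 2 := by positivity
    have hθ2 : θ ^ 2 ≤ 1 := by nlinarith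
    have s1 : θ ^ 2 * (θ ^ 2 + 3 * θ * K + K ^ 2) ≤ 1 * (θ ^ 2 + 3 * θ * K + K ^ 2) :=
      mul_le_mul_of_nonneg_right hθ2 hA
    have s2 : θ ^ 2 + 3 * θ * K + K ^ 2 ≤ 2 * (K + θ) ^ 2 := by nlinarith [mul_pos hθ hK0]
    have h7 : θ ^ 2 * (θ ^ 2 + 3 * θ * K + K ^ 2) ≤ 2 * (K + θ) ^ 2 := by linarith
    have h8 := mul_le_mul_of_nonneg_right h7 (sq_nonneg K)
    have h9 : (0:ℝ) ≤ K ^ 2 * (K + θ) ^ 2 := mul_nonneg (sq_nonneg K) (sq_nonneg (K + θ))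
    linarith
end

section
/- Let θ > 0 and let (M_k)_{k≥2} be a sequence of independent random variables on a probability space with P(M_k = j) = ((k-1)/(θ+k-1)) · (θ/(θ+k-1))^j for all j ∈ ℕ₀, and set B_k = 1{M_k ≥ 1}. Then (1/√(log n)) · ∑_{k=2}^{n} (M_k - B_k) → 0 in L² as n → ∞, i.e., E[ ( ∑_{k=2}^{n}(M_k - B_k) )² ] / log n → 0. -/
/-!
Write `N_k = M_k - B_k = (M_k - 1)⁺`. Since `(n - 1)⁺ ^ 2 ≤ n (n - 1)`, the second factorial moment
of the geometric law gives `E[N_k ^ 2] ≤ 2 (θ / (k - 1)) ^ 2`, which is summable in `k`, and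
`E[N_k] ≤ E[N_k ^ 2]` because `N_k` is integer valued. By independence
`E[(∑ N_k) ^ 2] = ∑ Var N_k + (∑ E N_k) ^ 2` is therefore bounded uniformly in `n`, so it is
`o(log n)`.
-/

open MeasureTheory ProbabilityTheory Filter

lemma hasSum_choose_two_mul_geometric_of_norm_lt_one {𝕜 : Type*} [NormedField 𝕜]
    {r : 𝕜} (hr : ‖r‖ < 1) :
    HasSum (fun n : ℕ ↦ (n.choose 2 : 𝕜) * r ^ n) (r ^ 2 / (1 - r) ^ 3) := by
  have h := (hasSum_choose_mul_geometric_of_norm_lt_one 2 hr).mul_left (r ^ 2)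
  refine (hasSum_nat_add_iff' 2).1 ?_
  rw [show r ^ 2 / (1 - r) ^ 3 - ∑ i ∈ Finset.range 2, (i.choose 2 : 𝕜) * r ^ i
      = r ^ 2 * (1 / (1 - r) ^ (2 + 1)) by norm_num [Finset.sum_range_succ, div_eq_mul_inv]]
  exact h.congr_fun fun n ↦ by ring

lemma Nat.cast_sub_one_sq_le_two_mul_choose_two (n : ℕ) :
    ((n - 1 : ℕ) : ℝ) ^ 2 ≤ 2 * n.choose 2 := by
  rcases n with _ | n
  · simp
  · rw [Nat.cast_choose_two]
    push_cast
    nlinarith [n.cast_nonneg (α := ℝ)]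

lemma Nat.cast_sub_one_eq_sub_ite (n : ℕ) :
    ((n - 1 : ℕ) : ℝ) = n - if 1 ≤ n then 1 else 0 := by
  rcases n with _ | n <;> simp

namespace ProbabilityTheory

section Geometric

variable {p : unitInterval}

lemma hasSum_choose_two_geometricMeasure (hp : p ≠ 0) :
    HasSum (fun n : ℕ ↦ (1 - p : ℝ) ^ n * p * n.choose 2) (((1 - p) / p) ^ 2) := by
  have hp0 : (0 : ℝ) < p := unitInterval.pos_iff_ne_zero.2 hp
  have hr : ‖(1 - p : ℝ)‖ < 1 := by
    rw [Real.norm_of_nonneg (by linarith [p.2.2])]; linarith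
  have h := (hasSum_choose_two_mul_geometric_of_norm_lt_one hr).mul_left (p : ℝ)
  rw [sub_sub_cancel, show (p : ℝ) * ((1 - p) ^ 2 / p ^ 3) = ((1 - p) / p) ^ 2 by
    field_simp] at h
  exact h.congr_fun fun n ↦ by ring

lemma integrable_choose_two_geometricMeasure (hp : p ≠ 0) :
    Integrable (fun n : ℕ ↦ (n.choose 2 : ℝ)) (geometricMeasure p) :=
  (integrable_geometricMeasure_iff hp).2 <| by
    simpa using (hasSum_choose_two_geometricMeasure hp).summable

lemma integral_choose_two_geometricMeasure (hp : p ≠ 0) :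
    ∫ n, (n.choose 2 : ℝ) ∂geometricMeasure p = ((1 - p) / p) ^ 2 := by
  rw [integral_geometricMeasure hp, ← (hasSum_choose_two_geometricMeasure hp).tsum_eq]
  simp_rw [smul_eq_mul]

lemma integrable_sq_sub_one_geometricMeasure (hp : p ≠ 0) :
    Integrable (fun n : ℕ ↦ ((n - 1 : ℕ) : ℝ) ^ 2) (geometricMeasure p) :=
  ((integrable_choose_two_geometricMeasure hp).const_mul 2).mono' (by fun_prop)
    (.of_forall fun n ↦ by
      rw [Real.norm_of_nonneg (sq_nonneg _)]
      exact Nat.cast_sub_one_sq_le_two_mul_choose_two n)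

lemma integral_sq_sub_one_geometricMeasure_le (hp : p ≠ 0) :
    ∫ n, ((n - 1 : ℕ) : ℝ) ^ 2 ∂geometricMeasure p ≤ 2 * ((1 - p) / p) ^ 2 :=
  calc ∫ n, ((n - 1 : ℕ) : ℝ) ^ 2 ∂geometricMeasure p
      ≤ ∫ n, 2 * (n.choose 2 : ℝ) ∂geometricMeasure p :=
        integral_mono (integrable_sq_sub_one_geometricMeasure hp)
          ((integrable_choose_two_geometricMeasure hp).const_mul 2)
          Nat.cast_sub_one_sq_le_two_mul_choose_two
    _ = 2 * ((1 - p) / p) ^ 2 := by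
        rw [integral_const_mul, integral_choose_two_geometricMeasure hp]

end Geometric

lemma map_eq_geometricMeasure {Ω : Type*} [MeasurableSpace Ω] {μ : Measure Ω} {X : Ω → ℕ}
    (hX : Measurable X) {p : unitInterval} (hp : p ≠ 0)
    (hlaw : ∀ j : ℕ, μ {ω | X ω = j} = ENNReal.ofReal ((1 - p) ^ j * p)) :
    μ.map X = geometricMeasure p :=
  Measure.ext_of_singleton fun j ↦ by
    rw [Measure.map_apply hX (measurableSet_singleton j), geometricMeasure_singleton hp]
    exact hlaw j

variable {Ω ι : Type*} [MeasurableSpace Ω] {μ : Measure Ω} [IsProbabilityMeasure μ]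

lemma integral_sq_sum_le_of_pairwise_indepFun {Y : ι → Ω → ℝ} {s : Finset ι}
    (hY : ∀ i ∈ s, MemLp (Y i) 2 μ)
    (hind : (s : Set ι).Pairwise fun i j ↦ IndepFun (Y i) (Y j) μ) :
    ∫ ω, (∑ i ∈ s, Y i ω) ^ 2 ∂μ ≤
      ∑ i ∈ s, ∫ ω, Y i ω ^ 2 ∂μ + (∑ i ∈ s, ∫ ω, Y i ω ∂μ) ^ 2 := by
  have hvar := IndepFun.variance_sum hY hind
  rw [variance_eq_sub (memLp_finsetSum' s hY)] at hvar
  simp only [Pi.pow_apply, Finset.sum_apply] at hvar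
  rw [integral_finsetSum s fun i hi ↦ (hY i hi).integrable one_le_two] at hvar
  have hle : ∑ i ∈ s, variance (Y i) μ ≤ ∑ i ∈ s, ∫ ω, Y i ω ^ 2 ∂μ :=
    Finset.sum_le_sum fun i hi ↦ variance_le_expectation_sq (hY i hi).aestronglyMeasurable
  linarith

lemma integral_sq_sum_sub_one_le {X : ι → Ω → ℕ} {p : ι → unitInterval} {s : Finset ι}
    (hX : ∀ i ∈ s, Measurable (X i)) (hp : ∀ i ∈ s, p i ≠ 0)
    (hlaw : ∀ i ∈ s, μ.map (X i) = geometricMeasure (p i))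
    (hind : (s : Set ι).Pairwise fun i j ↦ IndepFun (X i) (X j) μ) :
    ∫ ω, (∑ i ∈ s, ((X i ω - 1 : ℕ) : ℝ)) ^ 2 ∂μ ≤
      (∑ i ∈ s, 2 * ((1 - p i : ℝ) / p i) ^ 2) +
        (∑ i ∈ s, 2 * ((1 - p i : ℝ) / p i) ^ 2) ^ 2 := by
  let Y i := (fun n : ℕ ↦ ((n - 1 : ℕ) : ℝ)) ∘ X i
  show ∫ ω, (∑ i ∈ s, Y i ω) ^ 2 ∂μ ≤ _
  have hmemLp : ∀ i ∈ s, MemLp (Y i) 2 μ := fun i hi ↦ by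
    have h := (memLp_two_iff_integrable_sq (by fun_prop)).2
      (integrable_sq_sub_one_geometricMeasure (hp i hi))
    exact (hlaw i hi ▸ h).comp_of_map (hX i hi).aemeasurable
  have hsq : ∀ i ∈ s, ∫ ω, Y i ω ^ 2 ∂μ ≤ 2 * ((1 - p i : ℝ) / p i) ^ 2 := fun i hi ↦ by
    have h := integral_sq_sub_one_geometricMeasure_le (hp i hi)
    rwa [← hlaw i hi, integral_map (hX i hi).aemeasurable (by fun_prop)] at h
  have hmean : ∀ i ∈ s, ∫ ω, Y i ω ∂μ ≤ ∫ ω, Y i ω ^ 2 ∂μ := fun i hi ↦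
    integral_mono ((hmemLp i hi).integrable one_le_two) (hmemLp i hi).integrable_sq
      fun ω ↦ show ((X i ω - 1 : ℕ) : ℝ) ≤ ((X i ω - 1 : ℕ) : ℝ) ^ 2 by
        exact_mod_cast Nat.le_self_pow two_ne_zero _
  have hmean_nonneg : 0 ≤ ∑ i ∈ s, ∫ ω, Y i ω ∂μ :=
    Finset.sum_nonneg fun i _ ↦ integral_nonneg fun ω ↦ Nat.cast_nonneg _
  calc ∫ ω, (∑ i ∈ s, Y i ω) ^ 2 ∂μ
      ≤ ∑ i ∈ s, ∫ ω, Y i ω ^ 2 ∂μ + (∑ i ∈ s, ∫ ω, Y i ω ∂μ) ^ 2 :=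
        integral_sq_sum_le_of_pairwise_indepFun hmemLp fun i hi j hj hij ↦
          (hind hi hj hij).comp measurable_from_nat measurable_from_nat
    _ ≤ _ := add_le_add (Finset.sum_le_sum hsq) (pow_le_pow_left₀ hmean_nonneg
        ((Finset.sum_le_sum hmean).trans (Finset.sum_le_sum hsq)) 2)

end ProbabilityTheory

lemma sum_Icc_two_inv_sq_sub_one_le (n : ℕ) :
    ∑ k ∈ Finset.Icc 2 n, (((k : ℝ) - 1) ^ 2)⁻¹ ≤ 2 := by
  have h : ∑ k ∈ Finset.Icc 2 n, (((k : ℝ) - 1) ^ 2)⁻¹ =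
      ∑ i ∈ Finset.Ioo 0 n, ((i : ℝ) ^ 2)⁻¹ := by
    refine Finset.sum_nbij' (· - 1) (· + 1) ?_ ?_ ?_ ?_ ?_ <;> intro k hk <;>
      simp only [Finset.mem_Icc, Finset.mem_Ioo] at hk ⊢
    any_goals omega
    rw [Nat.cast_sub (by omega), Nat.cast_one]
  simpa [h] using sum_Ioo_inv_sq_le (α := ℝ) 0 n

-- clamped to `[0, 1]` only to land in `unitInterval`; equals `(k - 1)/(θ + k - 1)` for `k ≥ 1`
noncomputable def successProb (θ : ℝ) (k : ℕ) : unitInterval :=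
  Set.projIcc 0 1 zero_le_one (((k : ℝ) - 1) / (θ + k - 1))

section SuccessProb

variable {θ : ℝ} {k : ℕ}

lemma coe_successProb (hθ : 0 ≤ θ) (hk : 1 ≤ k) :
    (successProb θ k : ℝ) = ((k : ℝ) - 1) / (θ + k - 1) := by
  have hk' : (1 : ℝ) ≤ k := by exact_mod_cast hk
  rw [successProb, Set.projIcc_of_mem _ ⟨by apply div_nonneg <;> linarith,
    div_le_one_of_le₀ (by linarith) (by linarith)⟩]

lemma successProb_ne_zero (hθ : 0 ≤ θ) (hk : 2 ≤ k) : successProb θ k ≠ 0 := by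
  have hk' : (2 : ℝ) ≤ k := by exact_mod_cast hk
  rw [← unitInterval.coe_ne_zero, coe_successProb hθ (by omega)]
  exact (div_pos (by linarith) (by linarith)).ne'

lemma one_sub_successProb (hθ : 0 ≤ θ) (hk : 2 ≤ k) :
    (1 - successProb θ k : ℝ) = θ / (θ + k - 1) := by
  have hk' : (2 : ℝ) ≤ k := by exact_mod_cast hk
  have hd : θ + k - 1 ≠ 0 := (by linarith : (0 : ℝ) < θ + k - 1).ne'
  rw [coe_successProb hθ (by omega)]
  field_simp
  ring

lemma one_sub_successProb_div (hθ : 0 ≤ θ) (hk : 2 ≤ k) :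
    (1 - successProb θ k : ℝ) / successProb θ k = θ / (k - 1) := by
  have hk' : (2 : ℝ) ≤ k := by exact_mod_cast hk
  have hd : θ + k - 1 ≠ 0 := (by linarith : (0 : ℝ) < θ + k - 1).ne'
  have hk1 : (k : ℝ) - 1 ≠ 0 := (by linarith : (0 : ℝ) < k - 1).ne'
  rw [one_sub_successProb hθ hk, coe_successProb hθ (by omega)]
  field_simp

lemma map_eq_geometricMeasure_successProb {Ω : Type*} [MeasurableSpace Ω] {μ : Measure Ω}
    {X : Ω → ℕ} (hX : Measurable X) (hθ : 0 ≤ θ) (hk : 2 ≤ k)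
    (hlaw : ∀ j : ℕ, μ {ω | X ω = j} =
      ENNReal.ofReal (((k : ℝ) - 1) / (θ + k - 1) * (θ / (θ + k - 1)) ^ j)) :
    μ.map X = geometricMeasure (successProb θ k) :=
  map_eq_geometricMeasure hX (successProb_ne_zero hθ hk) fun j ↦ by
    rw [hlaw j, one_sub_successProb hθ hk, coe_successProb hθ (by omega), mul_comm]

lemma sum_Icc_two_mul_sq_odds_successProb_le (hθ : 0 ≤ θ) (n : ℕ) :
    ∑ k ∈ Finset.Icc 2 n, 2 * ((1 - successProb θ k : ℝ) / successProb θ k) ^ 2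
      ≤ 4 * θ ^ 2 :=
  calc ∑ k ∈ Finset.Icc 2 n, 2 * ((1 - successProb θ k : ℝ) / successProb θ k) ^ 2
      = 2 * θ ^ 2 * ∑ k ∈ Finset.Icc 2 n, (((k : ℝ) - 1) ^ 2)⁻¹ := by
        rw [Finset.mul_sum]
        refine Finset.sum_congr rfl fun k hk ↦ ?_
        rw [one_sub_successProb_div hθ (Finset.mem_Icc.1 hk).1, div_pow, div_eq_mul_inv]
        ring
    _ ≤ 2 * θ ^ 2 * 2 := by gcongr; exact sum_Icc_two_inv_sq_sub_one_le n
    _ = 4 * θ ^ 2 := by ring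

end SuccessProb

lemma tendsto_div_log_of_nonneg_of_le {a : ℕ → ℝ} {C : ℝ} (h0 : ∀ n, 0 ≤ a n)
    (hC : ∀ n, a n ≤ C) : Tendsto (fun n ↦ a n / Real.log n) atTop (nhds 0) := by
  refine squeeze_zero' (g := fun n : ℕ ↦ C / Real.log n) ?_ ?_ ?_
  · exact .of_forall fun n ↦ div_nonneg (h0 n) (Real.log_natCast_nonneg n)
  · exact .of_forall fun n ↦ div_le_div_of_nonneg_right (hC n) (Real.log_natCast_nonneg n)
  · exact tendsto_const_nhds.div_atTop (Real.tendsto_log_atTop.comp tendsto_natCast_atTop_atTop)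

/-- `L²` convergence of the difference between the number of segregating sites and the
number of cycles: if `(M_k)_{k≥2}` are independent geometrics with success parameters
`(k-1)/(θ+k-1)` and `B_k = 1{M_k ≥ 1}`, then
`E[(∑_{k=2}^n (M_k - B_k))²]/log n → 0` as `n → ∞`. -/
theorem sites_sub_cycles_L2_tendsto_zero {Ω : Type*} [MeasurableSpace Ω]
    (μ : Measure Ω) [IsProbabilityMeasure μ]
    (θ : ℝ) (hθ : 0 < θ)
    (M : ℕ → Ω → ℕ) (hmeas : ∀ k, Measurable (M k))
    (hindep : iIndepFun
      (fun k : {k : ℕ // 2 ≤ k} => M k.val) μ)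
    (hlaw : ∀ k, 2 ≤ k → ∀ j : ℕ, μ {ω | M k ω = j} =
      ENNReal.ofReal (((k : ℝ) - 1) / (θ + k - 1) * (θ / (θ + k - 1)) ^ j)) :
    Tendsto
      (fun n : ℕ =>
        (∫ ω, (∑ k ∈ Finset.Icc 2 n,
            ((M k ω : ℝ) - if 1 ≤ M k ω then 1 else 0)) ^ 2 ∂μ) / Real.log n)
      atTop (nhds 0) := by
  simp_rw [← Nat.cast_sub_one_eq_sub_ite]
  refine tendsto_div_log_of_nonneg_of_le (C := 4 * θ ^ 2 + (4 * θ ^ 2) ^ 2)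
    (fun n ↦ integral_nonneg fun ω ↦ sq_nonneg _) fun n ↦ ?_
  have hk : ∀ k ∈ Finset.Icc 2 n, 2 ≤ k := fun k hk ↦ (Finset.mem_Icc.1 hk).1
  have hpair : (Finset.Icc 2 n : Set ℕ).Pairwise fun i j ↦ IndepFun (M i) (M j) μ :=
    fun i hi j hj hij ↦ hindep.indepFun (i := ⟨i, hk i hi⟩) (j := ⟨j, hk j hj⟩)
      (by simpa [Subtype.ext_iff] using hij)
  have hc := sum_Icc_two_mul_sq_odds_successProb_le hθ.le n
  calc _ ≤ _ := integral_sq_sum_sub_one_le (fun k _ ↦ hmeas k)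
        (fun k hk' ↦ successProb_ne_zero hθ.le (hk k hk'))
        (fun k hk' ↦ map_eq_geometricMeasure_successProb (hmeas k) hθ.le (hk k hk')
          (hlaw k (hk k hk'))) hpair
    _ ≤ 4 * θ ^ 2 + (4 * θ ^ 2) ^ 2 := by gcongr
end

section
/- Let θ > 0 and let (M_k)_{k≥2} be a sequence of independent random variables on a probability space with P(M_k = j) = ((k-1)/(θ+k-1)) · (θ/(θ+k-1))^j for all j ∈ ℕ₀, and set B_k = 1{M_k ≥ 1}. Then the series ∑_{k=2}^{∞} (M_k - B_k) converges almost surely to an almost surely finite limit; that is, the partial sums Δ(n) = ∑_{k=2}^{n} (M_k - B_k) converge almost surely as n → ∞. -/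
/-!
Since `M_k - B_k = (M_k - 1)⁺ ≥ 0`, there is no cancellation to control: the expectations
`E[(M_k - 1)⁺] = θ² / ((k - 1)(θ + k - 1)) = O(k⁻²)` are summable, so by monotone convergence the
series `∑ (M_k - B_k)` has finite expectation and is therefore finite almost surely.
-/

open MeasureTheory ProbabilityTheory Filter Finset Topology
open scoped ENNReal NNReal

lemma natCast_sub_ite_eq_natCast_pred {R : Type*} [AddGroupWithOne R] (m : ℕ) :
    (m : R) - (if 1 ≤ m then 1 else 0) = ((m - 1 : ℕ) : R) := by
  split_ifs with hm
  · rw [Nat.cast_sub hm, Nat.cast_one]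
  · simp [Nat.lt_one_iff.mp (not_le.mp hm)]

lemma tendsto_sum_Icc_of_summable {G : Type*} [AddCommGroup G] [TopologicalSpace G]
    [IsTopologicalAddGroup G] {f : ℕ → G} (hf : Summable f) (m : ℕ) :
    Tendsto (fun n => ∑ k ∈ Icc m n, f k) atTop (𝓝 (∑' k, f k - ∑ k ∈ range m, f k)) := by
  have hrange : Tendsto (fun n => ∑ k ∈ range (n + 1), f k) atTop (𝓝 (∑' k, f k)) :=
    hf.tendsto_sum_tsum_nat.comp (tendsto_add_atTop_nat 1)
  refine (hrange.sub_const _).congr' ?_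
  filter_upwards [eventually_ge_atTop m] with n hn
  rw [← Ico_add_one_right_eq_Icc, sum_Ico_eq_sub f (by omega)]

lemma hasSum_natPred_mul_geometric {q : ℝ} (hq₀ : 0 ≤ q) (hq₁ : q < 1) :
    HasSum (fun j : ℕ => ((j - 1 : ℕ) : ℝ) * ((1 - q) * q ^ j)) (q ^ 2 / (1 - q)) := by
  have hq : ‖q‖ < 1 := by rwa [Real.norm_of_nonneg hq₀]
  have h := (hasSum_coe_mul_geometric_of_norm_lt_one hq).mul_left ((1 - q) * q)
  rw [show (1 - q) * q * (q / (1 - q) ^ 2) = q ^ 2 / (1 - q) by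
    field_simp [show 1 - q ≠ 0 by linarith]] at h
  have h' : HasSum (fun j : ℕ => ((j + 1 - 1 : ℕ) : ℝ) * ((1 - q) * q ^ (j + 1)))
      (q ^ 2 / (1 - q)) :=
    h.congr_fun fun j => by rw [Nat.add_sub_cancel, pow_succ]; ring
  have h0 := (hasSum_nat_add_iff (f := fun j : ℕ => ((j - 1 : ℕ) : ℝ) * ((1 - q) * q ^ j)) 1).mp h'
  rwa [sum_range_one, Nat.zero_sub, Nat.cast_zero, zero_mul, add_zero] at h0

lemma lintegral_comp_nat_eq_tsum {Ω : Type*} [MeasurableSpace Ω] (μ : Measure Ω)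
    {X : Ω → ℕ} (hX : Measurable X) (h : ℕ → ℝ≥0∞) :
    ∫⁻ ω, h (X ω) ∂μ = ∑' j, h j * μ {ω | X ω = j} := by
  rw [← lintegral_map Measurable.of_discrete hX, lintegral_countable']
  refine tsum_congr fun j => ?_
  rw [Measure.map_apply hX (measurableSet_singleton j)]
  rfl

lemma lintegral_natPred_of_geometric {Ω : Type*} [MeasurableSpace Ω] (μ : Measure Ω)
    {X : Ω → ℕ} (hX : Measurable X) {q : ℝ} (hq₀ : 0 ≤ q) (hq₁ : q < 1)
    (hlaw : ∀ j : ℕ, μ {ω | X ω = j} = ENNReal.ofReal ((1 - q) * q ^ j)) :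
    ∫⁻ ω, ((X ω - 1 : ℕ) : ℝ≥0∞) ∂μ = ENNReal.ofReal (q ^ 2 / (1 - q)) := by
  have hsum := hasSum_natPred_mul_geometric hq₀ hq₁
  have hterm_nonneg (j : ℕ) : 0 ≤ ((j - 1 : ℕ) : ℝ) * ((1 - q) * q ^ j) := by
    have : 0 ≤ 1 - q := by linarith
    positivity
  rw [lintegral_comp_nat_eq_tsum μ hX (fun j => ((j - 1 : ℕ) : ℝ≥0∞)), ← hsum.tsum_eq,
    ENNReal.ofReal_tsum_of_nonneg hterm_nonneg hsum.summable]
  refine tsum_congr fun j => ?_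
  rw [hlaw, ENNReal.ofReal_mul (Nat.cast_nonneg _), ENNReal.ofReal_natCast]

lemma ae_summable_of_tsum_lintegral_ne_top {Ω : Type*} [MeasurableSpace Ω] {μ : Measure Ω}
    {f : ℕ → Ω → ℝ≥0} (hf : ∀ k, Measurable (f k))
    (h : ∑' k, ∫⁻ ω, (f k ω : ℝ≥0∞) ∂μ ≠ ∞) :
    ∀ᵐ ω ∂μ, Summable (fun k => (f k ω : ℝ)) := by
  have hmeas (k : ℕ) : Measurable (fun ω => (f k ω : ℝ≥0∞)) := (hf k).coe_nnreal_ennreal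
  rw [← lintegral_tsum fun k => (hmeas k).aemeasurable] at h
  filter_upwards [ae_lt_top (Measurable.tsum hmeas) h] with ω hω
  exact NNReal.summable_coe.mpr (ENNReal.tsum_coe_ne_top_iff_summable.mp hω.ne)

lemma lintegral_natPred_le_of_law {Ω : Type*} [MeasurableSpace Ω] (μ : Measure Ω)
    {θ : ℝ} (hθ : 0 < θ) {k : ℕ} (hk : 2 ≤ k) {X : Ω → ℕ} (hX : Measurable X)
    (hlaw : ∀ j : ℕ, μ {ω | X ω = j} =
      ENNReal.ofReal (((k : ℝ) - 1) / (θ + k - 1) * (θ / (θ + k - 1)) ^ j)) :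
    ∫⁻ ω, ((X ω - 1 : ℕ) : ℝ≥0∞) ∂μ ≤ ENNReal.ofReal (θ ^ 2 / ((k : ℝ) - 1) ^ 2) := by
  have hk' : (1 : ℝ) < k := by exact_mod_cast hk
  have hD : 0 < θ + k - 1 := by linarith
  have hq₁ : θ / (θ + k - 1) < 1 := (div_lt_one hD).mpr (by linarith)
  have hsucc : 1 - θ / (θ + k - 1) = ((k : ℝ) - 1) / (θ + k - 1) := by
    field_simp; ring
  rw [lintegral_natPred_of_geometric μ hX (by positivity) hq₁ (by simpa only [hsucc] using hlaw),
    hsucc]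
  refine ENNReal.ofReal_le_ofReal ?_
  calc (θ / (θ + k - 1)) ^ 2 / (((k : ℝ) - 1) / (θ + k - 1))
      = θ ^ 2 / ((θ + k - 1) * ((k : ℝ) - 1)) := by field_simp
    _ ≤ θ ^ 2 / ((k : ℝ) - 1) ^ 2 := by
      rw [sq ((k : ℝ) - 1)]
      gcongr
      linarith

lemma tsum_lintegral_natPred_ne_top {Ω : Type*} [MeasurableSpace Ω] (μ : Measure Ω)
    {θ : ℝ} (hθ : 0 < θ) {M : ℕ → Ω → ℕ} (hmeas : ∀ k, Measurable (M k))
    (hlaw : ∀ k, 2 ≤ k → ∀ j : ℕ, μ {ω | M k ω = j} =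
      ENNReal.ofReal (((k : ℝ) - 1) / (θ + k - 1) * (θ / (θ + k - 1)) ^ j)) :
    ∑' k, ∫⁻ ω, (((M (k + 2) ω - 1 : ℕ) : ℝ≥0) : ℝ≥0∞) ∂μ ≠ ∞ := by
  have hsummable : Summable (fun k : ℕ => θ ^ 2 / (((k + 2 : ℕ) : ℝ) - 1) ^ 2) := by
    refine (((summable_nat_add_iff 1).mpr
      (Real.summable_one_div_nat_pow.mpr one_lt_two)).mul_left (θ ^ 2)).congr fun k => ?_
    push_cast
    ring
  refine ne_top_of_le_ne_top ?_ (ENNReal.tsum_le_tsum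
    (g := fun k => ENNReal.ofReal (θ ^ 2 / (((k + 2 : ℕ) : ℝ) - 1) ^ 2)) fun k => ?_)
  · rw [← ENNReal.ofReal_tsum_of_nonneg (fun k => by positivity) hsummable]
    exact ENNReal.ofReal_ne_top
  · simpa only [ENNReal.coe_natCast] using
      lintegral_natPred_le_of_law μ hθ (by omega) (hmeas (k + 2)) (hlaw (k + 2) (by omega))

theorem sites_sub_cycles_ae_converges_general {Ω : Type*} [MeasurableSpace Ω]
    (μ : Measure Ω)
    (θ : ℝ) (hθ : 0 < θ)
    (M : ℕ → Ω → ℕ) (hmeas : ∀ k, Measurable (M k))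
    (hlaw : ∀ k, 2 ≤ k → ∀ j : ℕ, μ {ω | M k ω = j} =
      ENNReal.ofReal (((k : ℝ) - 1) / (θ + k - 1) * (θ / (θ + k - 1)) ^ j)) :
    ∀ᵐ ω ∂μ, ∃ c : ℝ,
      Tendsto
        (fun n : ℕ => ∑ k ∈ Finset.Icc 2 n,
          ((M k ω : ℝ) - if 1 ≤ M k ω then 1 else 0))
        atTop (nhds c) := by
  have hae := ae_summable_of_tsum_lintegral_ne_top
    (f := fun k ω => ((M (k + 2) ω - 1 : ℕ) : ℝ≥0))
    (fun k => (measurable_from_nat (f := fun n : ℕ => ((n - 1 : ℕ) : ℝ≥0))).comp (hmeas (k + 2)))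
    (tsum_lintegral_natPred_ne_top μ hθ hmeas hlaw)
  filter_upwards [hae] with ω hω
  simp only [NNReal.coe_natCast] at hω
  have hsum := (summable_nat_add_iff (f := fun k => ((M k ω - 1 : ℕ) : ℝ)) 2).mp hω
  simp_rw [natCast_sub_ite_eq_natCast_pred]
  exact ⟨_, tendsto_sum_Icc_of_summable hsum 2⟩

/-- Almost sure convergence of the series `∑_{k≥2} (M_k - B_k)`, where the `M_k` are
independent geometrics with success parameters `(k-1)/(θ+k-1)` and `B_k = 1{M_k ≥ 1}`:
the partial sums `Δ(n) = ∑_{k=2}^n (M_k - B_k)` converge almost surely to a finite limit. -/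
theorem sites_sub_cycles_ae_converges {Ω : Type*} [MeasurableSpace Ω]
    (μ : Measure Ω) [IsProbabilityMeasure μ]
    (θ : ℝ) (hθ : 0 < θ)
    (M : ℕ → Ω → ℕ) (hmeas : ∀ k, Measurable (M k))
    (hindep : iIndepFun
      (fun k : {k : ℕ // 2 ≤ k} => M k.val) μ)
    (hlaw : ∀ k, 2 ≤ k → ∀ j : ℕ, μ {ω | M k ω = j} =
      ENNReal.ofReal (((k : ℝ) - 1) / (θ + k - 1) * (θ / (θ + k - 1)) ^ j)) :
    ∀ᵐ ω ∂μ, ∃ c : ℝ,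
      Tendsto
        (fun n : ℕ => ∑ k ∈ Finset.Icc 2 n,
          ((M k ω : ℝ) - if 1 ≤ M k ω then 1 else 0))
        atTop (nhds c) :=
  sites_sub_cycles_ae_converges_general μ θ hθ M hmeas hlaw
end
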